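/- arXiv:1109.1552 — 3 statements merged into one kernel-verified Lean document; each statement's English description precedes it below -/
import Mathlib

section
/- Let X_1,...,X_n be random variables with range [0,b], and suppose there exist constants μ and C with 0 < C < μ such that |E[X_t | X_1,...,X_{t-1}] - μ| ≤ C for all t. Let S_n = X_1 + ... + X_n. Then for all a ≥ 0, P(S_n ≥ n(μ+C) + a) ≤ exp(-2(a(μ-C)/(b(μ+C)))²/n). -/
/-!
Conditionally on the past `ℱ t`, convexity of `exp` bounds `E[exp (l X_t) | ℱ t]` by the chord
`1 + (exp (l b) - 1) / b * E[X_t | ℱ t]`, and Hoeffding's lemma for a Bernoulli variable bounds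
the chord by `exp (l E[X_t | ℱ t] + l² b² / 8) ≤ exp (l (μ + C) + l² b² / 8)`. Peeling off one
variable at a time gives `E[exp (l S_n)] ≤ exp (n (l (μ + C) + l² b² / 8))`, and Chernoff's bound
with `l = 4 a / (n b²)` yields `P(S_n ≥ n (μ + C) + a) ≤ exp (-2 a² / (n b²))`, which is stronger
than the claim because `0 < μ - C < μ + C`.
-/

open MeasureTheory ProbabilityTheory Real

-- Hoeffding's lemma for the law `(1 - p) δ₀ + p δ₁`.
lemma one_sub_add_mul_exp_le {p : ℝ} (hp0 : 0 ≤ p) (hp1 : p ≤ 1) (u : ℝ) :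
    1 - p + p * exp u ≤ exp (p * u + u ^ 2 / 8) := by
  let β : Measure ℝ :=
    ENNReal.ofReal (1 - p) • Measure.dirac 0 + ENNReal.ofReal p • Measure.dirac 1
  have : IsProbabilityMeasure β :=
    ⟨by simp [β, ← ENNReal.ofReal_add (sub_nonneg.2 hp1) hp0]⟩
  have hβ (f : ℝ → ℝ) : ∫ x, f x ∂β = (1 - p) * f 0 + p * f 1 := by
    rw [integral_add_measure, integral_smul_measure, integral_smul_measure, integral_dirac,
      integral_dirac, ENNReal.toReal_ofReal (sub_nonneg.2 hp1), ENNReal.toReal_ofReal hp0,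
      smul_eq_mul, smul_eq_mul]
    all_goals exact (integrable_dirac (by simp)).smul_measure ENNReal.ofReal_ne_top
  have hsupp : ∀ᵐ x ∂β, id x ∈ Set.Icc (0 : ℝ) 1 :=
    ae_add_measure_iff.2 ⟨Measure.ae_smul_measure (by simp) _,
      Measure.ae_smul_measure (by simp) _⟩
  have hmgf := (hasSubgaussianMGF_of_mem_Icc aemeasurable_id hsupp).mgf_le u
  simp only [mgf, hβ, id] at hmgf
  norm_num at hmgf
  calc 1 - p + p * exp u = ((1 - p) * exp (-(u * p)) + p * exp (u * (1 - p))) * exp (u * p) := by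
        rw [add_mul, mul_assoc, mul_assoc, ← exp_add, ← exp_add, neg_add_cancel, exp_zero,
          show u * (1 - p) + u * p = u by ring, mul_one]
    _ ≤ exp (1 / 4 * u ^ 2 / 2) * exp (u * p) := by gcongr
    _ = exp (p * u + u ^ 2 / 8) := by rw [← exp_add]; ring_nf

lemma exp_mul_le_one_add_mul {b l y : ℝ} (hb : 0 < b) (hy : y ∈ Set.Icc 0 b) :
    exp (l * y) ≤ 1 + (exp (l * b) - 1) / b * y := by
  have hθ0 : 0 ≤ y / b := div_nonneg hy.1 hb.le
  have hθ1 : y / b ≤ 1 := (div_le_one hb).2 hy.2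
  have h := convexOn_exp.2 (Set.mem_univ 0) (Set.mem_univ (l * b)) (sub_nonneg.2 hθ1) hθ0
    (sub_add_cancel 1 _)
  simp only [smul_eq_mul, mul_zero, zero_add, exp_zero, mul_one] at h
  rw [show y / b * (l * b) = l * y by field_simp] at h
  calc exp (l * y) ≤ 1 - y / b + y / b * exp (l * b) := h
    _ = 1 + (exp (l * b) - 1) / b * y := by ring

lemma one_add_mul_le_exp {b l x : ℝ} (hb : 0 < b) (hx : x ∈ Set.Icc 0 b) :
    1 + (exp (l * b) - 1) / b * x ≤ exp (l * x + l ^ 2 * b ^ 2 / 8) := by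
  have h := one_sub_add_mul_exp_le (div_nonneg hx.1 hb.le) ((div_le_one hb).2 hx.2) (l * b)
  rw [show x / b * (l * b) + (l * b) ^ 2 / 8 = l * x + l ^ 2 * b ^ 2 / 8 by field_simp] at h
  calc 1 + (exp (l * b) - 1) / b * x = 1 - x / b + x / b * exp (l * b) := by ring
    _ ≤ _ := h

section CondExp

variable {Ω : Type*} {m m0 : MeasurableSpace Ω} {P : Measure Ω} [IsFiniteMeasure P]

lemma condExp_const_add_mul (hm : m ≤ m0) (α β : ℝ) {Y : Ω → ℝ} (hY : Integrable Y P) :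
    P[fun ω ↦ α + β * Y ω | m] =ᵐ[P] fun ω ↦ α + β * P[Y | m] ω := by
  have hadd : P[fun ω ↦ α + β * Y ω | m] =ᵐ[P] P[fun _ ↦ α | m] + P[β • Y | m] :=
    condExp_add (integrable_const α) (hY.const_mul β) m
  filter_upwards [hadd, condExp_smul (μ := P) β Y m] with ω h1 h2
  rw [h1, Pi.add_apply, h2, condExp_const hm, Pi.smul_apply, smul_eq_mul]

lemma condExp_mem_Icc (hm : m ≤ m0) {Y : Ω → ℝ} {a b : ℝ} (hY : Integrable Y P)
    (hrange : ∀ᵐ ω ∂P, Y ω ∈ Set.Icc a b) : ∀ᵐ ω ∂P, P[Y | m] ω ∈ Set.Icc a b := by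
  have hlow := condExp_mono (m := m) (integrable_const a) hY (hrange.mono fun _ h ↦ h.1)
  have hupp := condExp_mono (m := m) hY (integrable_const b) (hrange.mono fun _ h ↦ h.2)
  rw [condExp_const hm] at hlow hupp
  filter_upwards [hlow, hupp] with ω h1 h2 using ⟨h1, h2⟩

lemma condExp_exp_mul_le (hm : m ≤ m0) {Y : Ω → ℝ} {b ν l : ℝ}
    (hb : 0 < b) (hl : 0 ≤ l) (hY : AEMeasurable Y P) (hrange : ∀ᵐ ω ∂P, Y ω ∈ Set.Icc 0 b)
    (hν : ∀ᵐ ω ∂P, P[Y | m] ω ≤ ν) :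
    P[fun ω ↦ exp (l * Y ω) | m] ≤ᵐ[P] fun _ ↦ exp (l * ν + l ^ 2 * b ^ 2 / 8) := by
  have hYint : Integrable Y P := .of_mem_Icc 0 b hY hrange
  have hchord : P[fun ω ↦ exp (l * Y ω) | m]
      ≤ᵐ[P] P[fun ω ↦ 1 + (exp (l * b) - 1) / b * Y ω | m] :=
    condExp_mono (integrable_exp_mul_of_mem_Icc hY hrange)
      ((integrable_const 1).add (hYint.const_mul _))
      (hrange.mono fun _ hy ↦ exp_mul_le_one_add_mul hb hy)
  filter_upwards [hchord, condExp_const_add_mul hm 1 ((exp (l * b) - 1) / b) hYint,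
    condExp_mem_Icc hm hYint hrange, hν] with ω h_chord h_lin h_mem h_le
  calc P[fun ω ↦ exp (l * Y ω) | m] ω ≤ 1 + (exp (l * b) - 1) / b * P[Y | m] ω :=
        h_chord.trans_eq h_lin
    _ ≤ exp (l * P[Y | m] ω + l ^ 2 * b ^ 2 / 8) := one_add_mul_le_exp hb h_mem
    _ ≤ exp (l * ν + l ^ 2 * b ^ 2 / 8) := by gcongr

end CondExp

section AzumaHoeffding

variable {Ω : Type*} {m0 : MeasurableSpace Ω} {P : Measure Ω} {X : ℕ → Ω → ℝ} {b : ℝ}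

lemma ae_sum_range_mem_Icc (hrange : ∀ t, ∀ᵐ ω ∂P, X t ω ∈ Set.Icc 0 b) (n : ℕ) :
    ∀ᵐ ω ∂P, ∑ t ∈ Finset.range n, X t ω ∈ Set.Icc 0 (n * b) := by
  filter_upwards [ae_all_iff.2 hrange] with ω hω
  refine ⟨Finset.sum_nonneg fun t _ ↦ (hω t).1, ?_⟩
  calc ∑ t ∈ Finset.range n, X t ω ≤ ∑ _t ∈ Finset.range n, b :=
        Finset.sum_le_sum fun t _ ↦ (hω t).2
    _ = n * b := by simp

lemma integrable_exp_mul_sum_range [IsFiniteMeasure P] (hmeas : ∀ t, Measurable (X t))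
    (hrange : ∀ t, ∀ᵐ ω ∂P, X t ω ∈ Set.Icc 0 b) (l : ℝ) (n : ℕ) :
    Integrable (fun ω ↦ exp (l * ∑ t ∈ Finset.range n, X t ω)) P :=
  integrable_exp_mul_of_mem_Icc (Finset.measurable_sum _ fun t _ ↦ hmeas t).aemeasurable
    (ae_sum_range_mem_Icc hrange n)

lemma integral_exp_mul_sum_le [IsProbabilityMeasure P] {ℱ : ℕ → MeasurableSpace Ω}
    (hℱ : ∀ t, ℱ t ≤ m0) (hadapt : ∀ i t, i < t → Measurable[ℱ t] (X i)) {ν l : ℝ}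
    (hb : 0 < b) (hl : 0 ≤ l)
    (hrange : ∀ t, ∀ᵐ ω ∂P, X t ω ∈ Set.Icc 0 b) (hcond : ∀ t, ∀ᵐ ω ∂P, P[X t | ℱ t] ω ≤ ν)
    (n : ℕ) :
    ∫ ω, exp (l * ∑ t ∈ Finset.range n, X t ω) ∂P ≤ exp (l * ν + l ^ 2 * b ^ 2 / 8) ^ n := by
  have hmeas (i : ℕ) : Measurable (X i) := (hadapt i (i + 1) i.lt_succ_self).mono (hℱ _) le_rfl
  have hint := integrable_exp_mul_sum_range (P := P) hmeas hrange l
  induction n with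
  | zero => simp
  | succ n ih =>
    set K := exp (l * ν + l ^ 2 * b ^ 2 / 8)
    set f := fun ω ↦ exp (l * ∑ t ∈ Finset.range n, X t ω)
    set g := fun ω ↦ exp (l * X n ω)
    have hf : StronglyMeasurable[ℱ n] f :=
      ((Finset.measurable_sum _ fun i hi ↦ hadapt i n (Finset.mem_range.1 hi)).const_mul l).exp
        |>.stronglyMeasurable
    have hfg : (fun ω ↦ exp (l * ∑ t ∈ Finset.range (n + 1), X t ω)) = f * g := by
      ext ω; simp [f, g, Finset.sum_range_succ, mul_add, exp_add]
    have hg : Integrable g P := integrable_exp_mul_of_mem_Icc (hmeas n).aemeasurable (hrange n)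
    have hpull : P[f * g | ℱ n] =ᵐ[P] f * P[g | ℱ n] :=
      condExp_mul_of_stronglyMeasurable_left hf (hfg ▸ hint (n + 1)) hg
    calc ∫ ω, exp (l * ∑ t ∈ Finset.range (n + 1), X t ω) ∂P
        = ∫ ω, P[f * g | ℱ n] ω ∂P := by rw [hfg, integral_condExp (hℱ n)]
      _ = ∫ ω, f ω * P[g | ℱ n] ω ∂P := integral_congr_ae hpull
      _ ≤ ∫ ω, f ω * K ∂P := by
          refine integral_mono_ae (integrable_condExp.congr hpull) ((hint n).mul_const K) ?_
          filter_upwards [condExp_exp_mul_le (hℱ n) hb hl (hmeas n).aemeasurable (hrange n)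
            (hcond n)] with ω hω
          exact mul_le_mul_of_nonneg_left hω (exp_pos _).le
      _ = (∫ ω, f ω ∂P) * K := integral_mul_const K f
      _ ≤ K ^ n * K := by gcongr
      _ = K ^ (n + 1) := (pow_succ K n).symm

lemma measure_sum_range_ge_le [IsProbabilityMeasure P] {ℱ : ℕ → MeasurableSpace Ω}
    (hℱ : ∀ t, ℱ t ≤ m0) (hadapt : ∀ i t, i < t → Measurable[ℱ t] (X i)) {ν : ℝ} (hb : 0 < b)
    (hrange : ∀ t, ∀ᵐ ω ∂P, X t ω ∈ Set.Icc 0 b) (hcond : ∀ t, ∀ᵐ ω ∂P, P[X t | ℱ t] ω ≤ ν)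
    (n : ℕ) {a : ℝ} (ha : 0 ≤ a) :
    P {ω | n * ν + a ≤ ∑ t ∈ Finset.range n, X t ω}
      ≤ ENNReal.ofReal (exp (-2 * a ^ 2 / (n * b ^ 2))) := by
  have hmeas (i : ℕ) : Measurable (X i) := (hadapt i (i + 1) i.lt_succ_self).mono (hℱ _) le_rfl
  -- `l` minimises the Chernoff exponent `-l a + n l ^ 2 b ^ 2 / 8`
  set l := 4 * a / (n * b ^ 2)
  have hl : 0 ≤ l := by positivity
  have hexponent :
      -l * (n * ν + a) + n * (l * ν + l ^ 2 * b ^ 2 / 8) = -2 * a ^ 2 / (n * b ^ 2) := by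
    rcases n.eq_zero_or_pos with rfl | hn
    · simp [l]
    · simp only [l]
      field_simp
      ring
  rw [← ofReal_measureReal]
  refine ENNReal.ofReal_le_ofReal ?_
  calc P.real {ω | n * ν + a ≤ ∑ t ∈ Finset.range n, X t ω}
      ≤ exp (-l * (n * ν + a)) * mgf (fun ω ↦ ∑ t ∈ Finset.range n, X t ω) P l :=
        measure_ge_le_exp_mul_mgf _ hl (integrable_exp_mul_sum_range hmeas hrange l n)
    _ ≤ exp (-l * (n * ν + a)) * exp (l * ν + l ^ 2 * b ^ 2 / 8) ^ n :=
        mul_le_mul_of_nonneg_left (integral_exp_mul_sum_le hℱ hadapt hb hl hrange hcond n)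
          (exp_pos _).le
    _ = exp (-2 * a ^ 2 / (n * b ^ 2)) := by rw [← exp_nat_mul, ← exp_add, hexponent]

end AzumaHoeffding

/-- Drift-tolerant Chernoff–Hoeffding bound, upper tail (Lemma 1, eq. (6)). -/
theorem stmt0 {Ω : Type*} [MeasurableSpace Ω] (P : Measure Ω) [IsProbabilityMeasure P]
    (n : ℕ) (X : ℕ → Ω → ℝ) (b μ C : ℝ) (hb : 0 < b) (hC : 0 < C) (hCμ : C < μ)
    (hmeas : ∀ t, Measurable (X t))
    (hrange : ∀ t, ∀ᵐ ω ∂P, X t ω ∈ Set.Icc 0 b)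
    (hcond : ∀ t, ∀ᵐ ω ∂P,
      |(P[X t | ⨆ i ∈ Finset.range t, MeasurableSpace.comap (X i) inferInstance]) ω - μ| ≤ C)
    (a : ℝ) (ha : 0 ≤ a) :
    P {ω | (n : ℝ) * (μ + C) + a ≤ ∑ t ∈ Finset.range n, X t ω}
      ≤ ENNReal.ofReal (Real.exp (-2 * (a * (μ - C) / (b * (μ + C))) ^ 2 / n)) := by
  have hℱ (t : ℕ) : ⨆ i ∈ Finset.range t, MeasurableSpace.comap (X i) inferInstance ≤ ‹_› :=
    iSup₂_le fun i _ ↦ (hmeas i).comap_le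
  have hadapt (i t : ℕ) (hit : i < t) :
      Measurable[⨆ i ∈ Finset.range t, MeasurableSpace.comap (X i) inferInstance] (X i) :=
    measurable_iff_comap_le.2 (le_iSup₂_of_le i (Finset.mem_range.2 hit) le_rfl)
  have hcond_le (t : ℕ) : ∀ᵐ ω ∂P,
      (P[X t | ⨆ i ∈ Finset.range t, MeasurableSpace.comap (X i) inferInstance]) ω ≤ μ + C :=
    (hcond t).mono fun _ h ↦ by linarith [(abs_le.1 h).2]
  refine (measure_sum_range_ge_le hℱ hadapt hb hrange hcond_le n ha).trans
    (ENNReal.ofReal_le_ofReal (exp_le_exp.2 ?_))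
  have hμC : 0 < μ + C := by linarith
  have hratio : a * (μ - C) / (b * (μ + C)) ≤ a / b := by
    rw [div_le_div_iff₀ (by positivity) hb]
    nlinarith [mul_nonneg ha hb.le]
  have hsq : (a * (μ - C) / (b * (μ + C))) ^ 2 ≤ (a / b) ^ 2 :=
    pow_le_pow_left₀ (div_nonneg (mul_nonneg ha (by linarith)) (by positivity)) hratio 2
  calc -2 * a ^ 2 / (n * b ^ 2) = -2 * (a / b) ^ 2 / n := by ring
    _ ≤ -2 * (a * (μ - C) / (b * (μ + C))) ^ 2 / n :=
      div_le_div_of_nonneg_right (mul_le_mul_of_nonpos_left hsq (by norm_num)) n.cast_nonneg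
end

section
/- Let L > 2, let q ≥ 1 be an integer, and let w* > 0. Define α* = 1 + ⌈max{q, (w*/(√L - √2))²}⌉. Then for all integers s with s > α* and all real t ≥ e, one has exp(-2(w* - s·√(L ln t / s))² / (s - q)) ≤ t^{-4}. -/
/-- Equation (13): once an arm is played more than `α* = 1 + ⌈max{q, (w*/(√L-√2))²}⌉`
steps, the concentration exponential is dominated by `t⁻⁴` for all `t ≥ e`. -/
theorem stmt4 (L : ℝ) (hL : 2 < L) (q : ℕ) (hq : 1 ≤ q) (w : ℝ) (hw : 0 < w)
    (α : ℝ)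
    (hα : α = 1 + ((⌈max (q : ℝ) ((w / (Real.sqrt L - Real.sqrt 2)) ^ 2)⌉ : ℤ) : ℝ))
    (s : ℕ) (hs : α < s) (t : ℝ) (ht : Real.exp 1 ≤ t) :
    Real.exp (-2 * (w - s * Real.sqrt (L * Real.log t / s)) ^ 2 / ((s : ℝ) - q))
      ≤ t ^ (-4 : ℝ) := by
  have h2L : Real.sqrt 2 < Real.sqrt L := Real.sqrt_lt_sqrt (by norm_num) hL
  set d : ℝ := Real.sqrt L - Real.sqrt 2 with hd
  have hdpos : 0 < d := sub_pos.mpr h2L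
  have hceil := Int.le_ceil (max (q : ℝ) ((w / d) ^ 2))
  have hs' : α < (s : ℝ) := hs
  rw [hα] at hs'
  have hsq : (q : ℝ) + 1 < s := by
    have := le_max_left (q : ℝ) ((w / d) ^ 2)
    nlinarith [this.trans hceil]
  have hsw : (w / d) ^ 2 + 1 < s := by
    have := le_max_right (q : ℝ) ((w / d) ^ 2)
    nlinarith [this.trans hceil]
  have hspos : (0:ℝ) < s := by
    have : (1:ℝ) ≤ q := by exact_mod_cast hq
    linarith
  have hsqpos : (0:ℝ) < (s:ℝ) - q := by linarith
  have htpos : 0 < t := lt_of_lt_of_le (Real.exp_pos 1) ht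
  have hlog : 1 ≤ Real.log t := by
    calc (1:ℝ) = Real.log (Real.exp 1) := (Real.log_exp 1).symm
    _ ≤ Real.log t := Real.log_le_log (Real.exp_pos 1) ht
  have hlogpos : 0 < Real.log t := by linarith
  -- w < √s * d
  have hwd : w < Real.sqrt s * d := by
    have h1 : w / d < Real.sqrt s := by
      have h2 : Real.sqrt ((w/d)^2) < Real.sqrt s :=
        Real.sqrt_lt_sqrt (by positivity) (by linarith)
      rwa [Real.sqrt_sq (by positivity)] at h2
    calc w = (w / d) * d := by field_simp
    _ < Real.sqrt s * d := mul_lt_mul_of_pos_right h1 hdpos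
  set A : ℝ := (s:ℝ) * Real.sqrt (L * Real.log t / s) with hA
  have hAeq : A = Real.sqrt s * (Real.sqrt L * Real.sqrt (Real.log t)) := by
    have hss : (s:ℝ) = Real.sqrt s * Real.sqrt s := (Real.mul_self_sqrt hspos.le).symm
    rw [hA]
    calc (s:ℝ) * Real.sqrt (L * Real.log t / s)
        = Real.sqrt s * (Real.sqrt s * Real.sqrt (L * Real.log t / s)) := by
          rw [← mul_assoc, ← hss]
      _ = Real.sqrt s * Real.sqrt ((s:ℝ) * (L * Real.log t / s)) := by
          rw [Real.sqrt_mul hspos.le]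
      _ = Real.sqrt s * Real.sqrt (L * Real.log t) := by
          rw [mul_div_cancel₀ _ (ne_of_gt hspos)]
      _ = Real.sqrt s * (Real.sqrt L * Real.sqrt (Real.log t)) := by
          rw [Real.sqrt_mul (by linarith : (0:ℝ) ≤ L)]
  have hx1 : 1 ≤ Real.sqrt (Real.log t) := by
    rw [show (1:ℝ) = Real.sqrt 1 from (Real.sqrt_one).symm]
    exact Real.sqrt_le_sqrt hlog
  have hkey : Real.sqrt 2 * Real.sqrt s * Real.sqrt (Real.log t) ≤ A - w := by
    rw [hAeq]
    have hsnn : (0:ℝ) ≤ Real.sqrt s := Real.sqrt_nonneg _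
    nlinarith [hwd, hdpos, hx1, h2L.le, mul_nonneg hsnn (mul_nonneg (sub_nonneg.mpr h2L.le) (sub_nonneg.mpr hx1))]
  have hsq2 : 2 * (s:ℝ) * Real.log t ≤ (w - A) ^ 2 := by
    have hnn : 0 ≤ Real.sqrt 2 * Real.sqrt s * Real.sqrt (Real.log t) := by positivity
    have h2 : (Real.sqrt 2 * Real.sqrt s * Real.sqrt (Real.log t)) ^ 2 ≤ (A - w) ^ 2 := by
      exact pow_le_pow_left₀ hnn hkey 2
    have h3 : (Real.sqrt 2 * Real.sqrt s * Real.sqrt (Real.log t)) ^ 2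
        = 2 * (s:ℝ) * Real.log t := by
      rw [mul_pow, mul_pow, Real.sq_sqrt (by norm_num : (0:ℝ) ≤ 2),
        Real.sq_sqrt hspos.le, Real.sq_sqrt hlogpos.le]
    have h4 : (A - w) ^ 2 = (w - A) ^ 2 := by ring
    linarith [h3 ▸ h2, h4 ▸ (h3 ▸ h2)]
  have hfinal : -2 * (w - A) ^ 2 / ((s:ℝ) - q) ≤ Real.log t * (-4) := by
    rw [div_le_iff₀ hsqpos]
    have hqnn : (0:ℝ) ≤ q := Nat.cast_nonneg q
    nlinarith [mul_nonneg hlogpos.le hqnn]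
  calc Real.exp (-2 * (w - A) ^ 2 / ((s:ℝ) - q))
      ≤ Real.exp (Real.log t * (-4)) := Real.exp_le_exp.mpr hfinal
    _ = t ^ (-4 : ℝ) := (Real.rpow_def_of_pos htpos (-4)).symm
end

section
/- Let μ, C, b > 0 with 0 < C < μ, and let X_1,...,X_n be [0,b]-valued random variables with |E[X_t|X_1,...,X_{t-1}] - μ| ≤ C. Define X̂_t = (μ+C)·X_t / E[X_t | X̂_1,...,X̂_{t-1}]. Then X̂_t ≥ X_t almost surely, X̂_t takes values in [0, b(μ+C)/(μ-C)], and E[X̂_t | X̂_1,...,X̂_{t-1}] = μ + C for all t. -/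
/-!
Write `m_t` for the conditional mean of `X_t` given the past of `X`. As long as `m_t` is a.e.
nonzero, `Y_t = (μ + C) X_t / m_t` and `X_t = Y_t m_t / (μ + C)` express each variable a.e. through
the other one and the common past, so by strong induction on `t` the pasts of `X` and of `Y`
generate the same σ-algebra modulo null sets, and conditioning on either gives the same result.
Then `m_t ∈ [μ - C, μ + C]` yields the pointwise bounds, and pulling the bounded factor
`(μ + C) / m_t` out of the conditional expectation yields `E[Y_t | past] = (μ + C) m_t / m_t`.
-/

open MeasureTheory

section SupComap

variable {Ω ι : Type*}

lemma iSup_comap_eq_comap_pi (X : ι → Ω → ℝ) (s : Finset ι) :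
    (⨆ i ∈ s, MeasurableSpace.comap (X i) inferInstance) =
      MeasurableSpace.pi.comap fun ω (i : s) ↦ X i ω := by
  simp only [MeasurableSpace.pi, MeasurableSpace.comap_iSup, MeasurableSpace.comap_comp,
    Function.comp_def, iSup_subtype']

variable {m m0 : MeasurableSpace Ω} {P : Measure Ω} {X : ι → Ω → ℝ} {s : Finset ι}

lemma exists_measurable_pi_ae_eq (hX : ∀ i ∈ s, AEStronglyMeasurable[m] (X i) P) :
    ∃ Z : Ω → s → ℝ, Measurable[m] Z ∧ (fun ω (i : s) ↦ X i ω) =ᵐ[P] Z := by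
  choose Z hZm hXZ using fun i : s ↦ hX i i.2
  refine ⟨fun ω i ↦ Z i ω, (@measurable_pi_iff _ _ _ m _ _).2 fun i ↦ (hZm i).measurable, ?_⟩
  filter_upwards [ae_all_iff.2 hXZ] with ω hω
  exact funext hω

lemma exists_measurableSet_ae_eq_of_iSup_comap (hX : ∀ i ∈ s, AEStronglyMeasurable[m] (X i) P)
    {A : Set Ω} (hA : MeasurableSet[⨆ i ∈ s, MeasurableSpace.comap (X i) inferInstance] A) :
    ∃ A', MeasurableSet[m] A' ∧ A =ᵐ[P] A' := by
  rw [iSup_comap_eq_comap_pi] at hA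
  obtain ⟨B, hB, rfl⟩ := hA
  obtain ⟨Z, hZm, hXZ⟩ := exists_measurable_pi_ae_eq hX
  exact ⟨Z ⁻¹' B, hZm hB, hXZ.preimage B⟩

lemma aestronglyMeasurable_of_iSup_comap (hX : ∀ i ∈ s, AEStronglyMeasurable[m] (X i) P)
    {g : Ω → ℝ} (hg : StronglyMeasurable[⨆ i ∈ s, MeasurableSpace.comap (X i) inferInstance] g) :
    AEStronglyMeasurable[m] g P := by
  rw [iSup_comap_eq_comap_pi] at hg
  obtain ⟨φ, hφ, rfl⟩ := hg.measurable.exists_eq_measurable_comp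
  obtain ⟨Z, hZm, hXZ⟩ := exists_measurable_pi_ae_eq hX
  exact ⟨φ ∘ Z, (hφ.comp hZm).stronglyMeasurable, hXZ.fun_comp φ⟩

end SupComap

lemma condExp_ae_eq_condExp_of_measurableSet_ae_eq {Ω : Type*} {m₁ m₂ m0 : MeasurableSpace Ω}
    {P : Measure Ω} [IsFiniteMeasure P] (hm₁ : m₁ ≤ m0) (hm₂ : m₂ ≤ m0) (f : Ω → ℝ)
    (hsets : ∀ A, MeasurableSet[m₁] A → ∃ A', MeasurableSet[m₂] A' ∧ A =ᵐ[P] A')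
    (hcondExp : AEStronglyMeasurable[m₁] (P[f | m₂]) P) :
    P[f | m₂] =ᵐ[P] P[f | m₁] := by
  by_cases hf : Integrable f P
  swap
  · simp only [condExp_of_not_integrable hf, Filter.EventuallyEq.rfl]
  have := isFiniteMeasure_trim (μ := P) hm₁
  refine ae_eq_condExp_of_forall_setIntegral_eq hm₁ hf
    (fun _ _ _ ↦ integrable_condExp.integrableOn) (fun A hA _ ↦ ?_) hcondExp
  obtain ⟨A', hA', hAA'⟩ := hsets A hA
  rw [setIntegral_congr_set hAA', setIntegral_condExp hm₂ hf hA', setIntegral_congr_set hAA']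

/-- `σ(X 0, …, X (t - 1))`, the information available before time `t`. -/
abbrev pastSigma {Ω : Type*} (X : ℕ → Ω → ℝ) (t : ℕ) : MeasurableSpace Ω :=
  ⨆ i ∈ Finset.range t, MeasurableSpace.comap (X i) inferInstance

section PastSigma

variable {Ω : Type*} {m0 : MeasurableSpace Ω} {X Y : ℕ → Ω → ℝ}

lemma pastSigma_le (hX : ∀ t, Measurable (X t)) (t : ℕ) : pastSigma X t ≤ m0 :=
  iSup₂_le fun i _ ↦ (hX i).comap_le

lemma pastSigma_mono (X : ℕ → Ω → ℝ) {s t : ℕ} (hst : s ≤ t) : pastSigma X s ≤ pastSigma X t :=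
  biSup_mono fun _ hi ↦ Finset.range_subset_range.2 hst hi

lemma measurable_pastSigma_succ (X : ℕ → Ω → ℝ) (t : ℕ) :
    Measurable[pastSigma X (t + 1)] (X t) :=
  comap_measurable (X t) |>.mono (le_iSup₂ (f := fun i (_ : i ∈ Finset.range (t + 1)) ↦
    MeasurableSpace.comap (X i) inferInstance) t (Finset.self_mem_range_succ t)) le_rfl

variable {P : Measure Ω} [IsFiniteMeasure P]

lemma condExp_pastSigma_ae_eq (hX : ∀ t, Measurable (X t)) (hY : ∀ t, Measurable (Y t))
    {t : ℕ} (hXY : ∀ i < t, AEStronglyMeasurable[pastSigma Y t] (X i) P)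
    (hYX : ∀ i < t, AEStronglyMeasurable[pastSigma X t] (Y i) P) (f : Ω → ℝ) :
    P[f | pastSigma X t] =ᵐ[P] P[f | pastSigma Y t] := by
  refine condExp_ae_eq_condExp_of_measurableSet_ae_eq (pastSigma_le hY t) (pastSigma_le hX t) f
    (fun A hA ↦ exists_measurableSet_ae_eq_of_iSup_comap (X := Y) (s := Finset.range t)
      (fun i hi ↦ hYX i (Finset.mem_range.1 hi)) hA) ?_
  exact aestronglyMeasurable_of_iSup_comap (X := X) (s := Finset.range t)
    (fun i hi ↦ hXY i (Finset.mem_range.1 hi)) stronglyMeasurable_condExp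

lemma condExp_pastSigma_rescaled_ae_eq (hX : ∀ t, Measurable (X t))
    (hY : ∀ t, Measurable (Y t)) {a : ℝ} (ha : a ≠ 0)
    (hne : ∀ t, ∀ᵐ ω ∂P, P[X t | pastSigma X t] ω ≠ 0)
    (hYdef : ∀ t, ∀ᵐ ω ∂P, Y t ω = a * X t ω / P[X t | pastSigma Y t] ω) (t : ℕ) (f : Ω → ℝ) :
    P[f | pastSigma X t] =ᵐ[P] P[f | pastSigma Y t] := by
  induction t using Nat.strong_induction_on generalizing f with
  | _ t ih =>
  refine condExp_pastSigma_ae_eq hX hY (fun i hi ↦ ?_) (fun i hi ↦ ?_) f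
  · refine ⟨fun ω ↦ Y i ω * P[X i | pastSigma Y i] ω / a, ?_, ?_⟩
    · exact (((measurable_pastSigma_succ Y i).mono (pastSigma_mono Y hi) le_rfl).mul
        (stronglyMeasurable_condExp.measurable.mono (pastSigma_mono Y hi.le) le_rfl)).div_const
        a |>.stronglyMeasurable
    · filter_upwards [hYdef i, hne i, ih i hi (X i)] with ω hYω hneω hE
      rw [hYω, ← hE]
      field_simp
  · refine ⟨fun ω ↦ a * X i ω / P[X i | pastSigma X i] ω, ?_, ?_⟩
    · exact (((measurable_pastSigma_succ X i).mono (pastSigma_mono X hi) le_rfl).const_mul a).div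
        (stronglyMeasurable_condExp.measurable.mono (pastSigma_mono X hi.le) le_rfl)
        |>.stronglyMeasurable
    · filter_upwards [hYdef i, ih i hi (X i)] with ω hYω hE
      rw [hYω, hE]

end PastSigma

lemma condExp_const_mul_div_condExp {Ω : Type*} {m m0 : MeasurableSpace Ω} {P : Measure Ω}
    [IsFiniteMeasure P] (hm : m ≤ m0) (a : ℝ) {X : Ω → ℝ} (hX : Integrable X P) {ε : ℝ}
    (hε : 0 < ε) (hc : ∀ᵐ ω ∂P, ε ≤ P[X | m] ω) :
    P[fun ω ↦ a * X ω / P[X | m] ω | m] =ᵐ[P] fun _ ↦ a := by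
  have hbound : ∀ᵐ ω ∂P, ‖a / P[X | m] ω‖ ≤ |a| / ε := by
    filter_upwards [hc] with ω hω
    rw [norm_div, Real.norm_eq_abs, Real.norm_eq_abs, abs_of_pos (hε.trans_le hω)]
    gcongr
  calc P[fun ω ↦ a * X ω / P[X | m] ω | m]
      = P[(fun ω ↦ a / P[X | m] ω) * X | m] := by
        congr 1; ext ω; simp only [Pi.mul_apply]; ring
    _ =ᵐ[P] (fun ω ↦ a / P[X | m] ω) * P[X | m] :=
        condExp_stronglyMeasurable_mul_of_bound hm
          (stronglyMeasurable_const.div stronglyMeasurable_condExp) hX _ hbound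
    _ =ᵐ[P] fun _ ↦ a := by
        filter_upwards [hc] with ω hω
        exact div_mul_cancel₀ a (hε.trans_le hω).ne'

lemma le_mul_div_of_le {x a c : ℝ} (hx : 0 ≤ x) (hc : 0 < c) (hca : c ≤ a) : x ≤ a * x / c := by
  rw [le_div_iff₀ hc]
  nlinarith

lemma mul_div_mem_Icc_of_le {x a b c d : ℝ} (hx : x ∈ Set.Icc 0 b) (hd : 0 < d) (hdc : d ≤ c)
    (ha : 0 ≤ a) : a * x / c ∈ Set.Icc 0 (b * a / d) := by
  refine ⟨div_nonneg (mul_nonneg ha hx.1) (hd.le.trans hdc), ?_⟩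
  rw [mul_comm b]
  exact div_le_div₀ (mul_nonneg ha (hx.1.trans hx.2)) (by gcongr; exact hx.2) hd hdc

theorem stmt13_general {Ω : Type*} [MeasurableSpace Ω] (P : Measure Ω) [IsProbabilityMeasure P]
    (X : ℕ → Ω → ℝ) (b μ C : ℝ) (hC : 0 < C) (hCμ : C < μ)
    (hmeas : ∀ t, Measurable (X t))
    (hrange : ∀ t, ∀ᵐ ω ∂P, X t ω ∈ Set.Icc 0 b)
    (hcond : ∀ t, ∀ᵐ ω ∂P,
      |(P[X t | ⨆ i ∈ Finset.range t, MeasurableSpace.comap (X i) inferInstance]) ω - μ| ≤ C)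
    (Y : ℕ → Ω → ℝ) (hYmeas : ∀ t, Measurable (Y t))
    (hYdef : ∀ t, ∀ᵐ ω ∂P,
      Y t ω = (μ + C) * X t ω /
        (P[X t | ⨆ i ∈ Finset.range t, MeasurableSpace.comap (Y i) inferInstance]) ω) :
    ∀ t, (∀ᵐ ω ∂P, X t ω ≤ Y t ω) ∧
      (∀ᵐ ω ∂P, Y t ω ∈ Set.Icc 0 (b * (μ + C) / (μ - C))) ∧
      (P[Y t | ⨆ i ∈ Finset.range t, MeasurableSpace.comap (Y i) inferInstance]
        =ᵐ[P] fun _ => μ + C) := by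
  have hcondX (t : ℕ) : ∀ᵐ ω ∂P, P[X t | pastSigma X t] ω ∈ Set.Icc (μ - C) (μ + C) :=
    (hcond t).mono fun ω hω ↦ ⟨by linarith [abs_le.1 hω], by linarith [abs_le.1 hω]⟩
  intro t
  have hE := condExp_pastSigma_rescaled_ae_eq hmeas hYmeas (by linarith : μ + C ≠ 0)
    (fun t ↦ (hcondX t).mono fun ω hω ↦ (by linarith [hω.1] : (0 : ℝ) < _).ne') hYdef t (X t)
  have hcondY : ∀ᵐ ω ∂P, P[X t | pastSigma Y t] ω ∈ Set.Icc (μ - C) (μ + C) := by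
    filter_upwards [hcondX t, hE] with ω hω hEω
    rwa [← hEω]
  have hXint : Integrable (X t) P :=
    .of_bound (hmeas t).aestronglyMeasurable b <| (hrange t).mono fun ω hω ↦ by
      rw [Real.norm_eq_abs, abs_of_nonneg hω.1]; exact hω.2
  refine ⟨?_, ?_, ?_⟩
  · filter_upwards [hrange t, hcondY, hYdef t] with ω hx hc hY
    exact hY ▸ le_mul_div_of_le hx.1 (by linarith [hc.1]) hc.2
  · filter_upwards [hrange t, hcondY, hYdef t] with ω hx hc hY
    exact hY ▸ mul_div_mem_Icc_of_le hx (by linarith) hc.1 (by linarith)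
  · exact (condExp_congr_ae (hYdef t)).trans <| condExp_const_mul_div_condExp
      (pastSigma_le hYmeas t) _ hXint (by linarith) (hcondY.mono fun ω hω ↦ hω.1)

/-- The rescaling construction in the proof of Lemma 1: with
`X̂_t = (μ+C) X_t / E[X_t | X̂_1,…,X̂_{t-1}]`, one has `X̂_t ≥ X_t` a.s.,
`X̂_t ∈ [0, b(μ+C)/(μ-C)]` a.s., and `E[X̂_t | X̂_1,…,X̂_{t-1}] = μ + C`. -/
theorem stmt13 {Ω : Type*} [MeasurableSpace Ω] (P : Measure Ω) [IsProbabilityMeasure P]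
    (X : ℕ → Ω → ℝ) (b μ C : ℝ) (hb : 0 < b) (hC : 0 < C) (hCμ : C < μ)
    (hmeas : ∀ t, Measurable (X t))
    (hrange : ∀ t, ∀ᵐ ω ∂P, X t ω ∈ Set.Icc 0 b)
    (hcond : ∀ t, ∀ᵐ ω ∂P,
      |(P[X t | ⨆ i ∈ Finset.range t, MeasurableSpace.comap (X i) inferInstance]) ω - μ| ≤ C)
    (Y : ℕ → Ω → ℝ) (hYmeas : ∀ t, Measurable (Y t))
    (hYdef : ∀ t, ∀ᵐ ω ∂P,
      Y t ω = (μ + C) * X t ω /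
        (P[X t | ⨆ i ∈ Finset.range t, MeasurableSpace.comap (Y i) inferInstance]) ω) :
    ∀ t, (∀ᵐ ω ∂P, X t ω ≤ Y t ω) ∧
      (∀ᵐ ω ∂P, Y t ω ∈ Set.Icc 0 (b * (μ + C) / (μ - C))) ∧
      (P[Y t | ⨆ i ∈ Finset.range t, MeasurableSpace.comap (Y i) inferInstance]
        =ᵐ[P] fun _ => μ + C) :=
  stmt13_general P X b μ C hC hCμ hmeas hrange hcond Y hYmeas hYdef
end
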